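/- arXiv:1309.0109 — 2 statements merged into one kernel-verified Lean document; each statement's English description precedes it below -/
import Mathlib

section
/- Let $\beta_0 > 0$ and $\zeta \in (0,2)$. Then the set $\{ l \in \mathbb{R}_{>0} : \lfloor 2l+1 \rfloor / \lfloor 2 l^{1-\zeta/2}\beta_0^{-1/2} + 1 \rfloor \in 2\mathbb{N}+1 \text{ (i.e., the quotient is an odd positive integer)} \}$ is unbounded. -/
/-!
Put `l = n / 2` with `n ∈ ℕ`, so that `⌊2l + 1⌋ = n + 1`, and let `b n` be the denominator.
Since `1 - ζ/2 ∈ [0, 1)`, `b` is nondecreasing, at least `1` and `o(n)`. Hence for every odd `q`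
the integer sequence `n + 1 - q * b n` grows by at most one per step, starts `≤ 0` and is
eventually positive, so it vanishes at some `n`; there `n + 1 = q * b n ≥ q`, and letting
`q → ∞` gives arbitrarily large admissible `l`.
-/

open Filter Asymptotics Set

theorem Int.exists_eq_zero_of_le_add_one {f : ℕ → ℤ} (hf : ∀ n, f (n + 1) ≤ f n + 1)
    (h0 : f 0 ≤ 0) {N : ℕ} (hN : 0 < f N) : ∃ n, f n = 0 := by
  by_contra! hne
  have hneg : ∀ n, f n < 0 := fun n => by
    induction n with
    | zero => exact lt_of_le_of_ne h0 (hne 0)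
    | succ n ih => exact lt_of_le_of_ne (by linarith [hf n]) (hne (n + 1))
  exact (hneg N).not_gt hN

theorem exists_eq_mul_of_le_add_one_of_monotone {a b : ℕ → ℤ} (ha : ∀ n, a (n + 1) ≤ a n + 1)
    (hb : Monotone b) {q : ℤ} (hq : 0 ≤ q) (h0 : a 0 ≤ q * b 0) {N : ℕ} (hN : q * b N < a N) :
    ∃ n, a n = q * b n := by
  obtain ⟨n, hn⟩ := Int.exists_eq_zero_of_le_add_one (f := fun n => a n - q * b n)
    (fun n => by nlinarith [ha n, hb n.le_succ]) (by linarith) (by linarith)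
  exact ⟨n, by linarith⟩

theorem exists_natCast_add_one_eq_mul_floor {g : ℝ → ℝ} (hmono : MonotoneOn g (Ici 0))
    (hg : g =o[atTop] id) {q : ℤ} (hq : 0 ≤ q) (h0 : 1 ≤ q * ⌊g 0⌋) :
    ∃ n : ℕ, (n + 1 : ℤ) = q * ⌊g n⌋ := by
  have hbound : ∀ᶠ n : ℕ in atTop, |q * g n| ≤ |(n : ℝ)| :=
    tendsto_natCast_atTop_atTop.eventually (hg.const_mul_left (q : ℝ)).eventuallyLE
  obtain ⟨N, hN⟩ := hbound.exists
  have hlt : ((q * ⌊g N⌋ : ℤ) : ℝ) < N + 1 := calc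
    ((q * ⌊g N⌋ : ℤ) : ℝ) = q * ⌊g N⌋ := by push_cast; rfl
    _ ≤ q * g N := mul_le_mul_of_nonneg_left (Int.floor_le _) (by exact_mod_cast hq)
    _ ≤ |(N : ℝ)| := (le_abs_self _).trans hN
    _ < N + 1 := by rw [Nat.abs_cast]; linarith
  exact exists_eq_mul_of_le_add_one_of_monotone (a := fun n => n + 1) (fun n => by push_cast; rfl)
    (fun m n hmn => Int.floor_mono <|
      hmono (mem_Ici.2 m.cast_nonneg) (mem_Ici.2 n.cast_nonneg) (by exact_mod_cast hmn))
    hq (by simpa using h0) (N := N) (by exact_mod_cast hlt)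

theorem isLittleO_rpow_id_atTop {α : ℝ} (hα : α < 1) : (fun x : ℝ => x ^ α) =o[atTop] id := by
  refine (isLittleO_iff_tendsto' ?_).2 ?_
  · filter_upwards [eventually_gt_atTop 0] with x hx h
    exact absurd h hx.ne'
  · refine (tendsto_rpow_neg_atTop (sub_pos.2 hα)).congr' ?_
    filter_upwards [eventually_gt_atTop 0] with x hx
    rw [neg_sub, Real.rpow_sub_one hx.ne', id]

/-- At `x = 2l` this is `2 l^α c + 1`, the denominator of the theorem. -/
noncomputable def subcubeSide (α c x : ℝ) : ℝ := 2 * (x / 2) ^ α * c + 1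

section subcubeSide

variable {α c : ℝ}

theorem monotoneOn_subcubeSide (hα : 0 ≤ α) (hc : 0 ≤ c) :
    MonotoneOn (subcubeSide α c) (Ici 0) := fun x hx y _ hxy => by
  have := Real.rpow_le_rpow (div_nonneg (mem_Ici.1 hx) zero_le_two)
    (div_le_div_of_nonneg_right hxy zero_le_two) hα
  unfold subcubeSide
  gcongr

theorem one_le_floor_subcubeSide (hc : 0 ≤ c) {x : ℝ} (hx : 0 ≤ x) :
    1 ≤ ⌊subcubeSide α c x⌋ := by
  have := Real.rpow_nonneg (div_nonneg hx zero_le_two) α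
  exact Int.le_floor.2 (by push_cast; unfold subcubeSide; nlinarith)

theorem isLittleO_subcubeSide (hα : α < 1) : subcubeSide α c =o[atTop] id := by
  have h : (fun x : ℝ => (x / 2) ^ α) =o[atTop] id :=
    ((isLittleO_rpow_id_atTop hα).comp_tendsto (tendsto_id.atTop_div_const two_pos)).trans_isBigO
      (isBigO_of_le _ fun x => by simp [div_le_self])
  exact ((h.const_mul_left (2 * c)).add (isLittleO_const_id_atTop 1)).congr_left fun x => by
    unfold subcubeSide; ring

end subcubeSide

/-- The set of admissible length scales `l` for which
`⌊2l+1⌋ / ⌊2 l^{1-ζ/2} β₀^{-1/2} + 1⌋` is an odd positive integer is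
unbounded. -/
theorem admissible_scales_unbounded (β₀ ζ : ℝ) (hβ₀ : 0 < β₀)
    (hζ0 : 0 < ζ) (hζ2 : ζ < 2) :
    ¬ BddAbove {l : ℝ | 0 < l ∧ ∃ m : ℕ,
      ⌊2 * l + 1⌋ = (2 * (m : ℤ) + 1) *
        ⌊2 * l ^ (1 - ζ / 2) * β₀ ^ (-(1 / 2) : ℝ) + 1⌋} := by
  have hc : 0 ≤ β₀ ^ (-(1 / 2) : ℝ) := Real.rpow_nonneg hβ₀.le _
  have hb : ∀ x : ℝ, 0 ≤ x → 1 ≤ ⌊subcubeSide (1 - ζ / 2) (β₀ ^ (-(1 / 2) : ℝ)) x⌋ :=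
    fun _ => one_le_floor_subcubeSide hc
  refine not_bddAbove_iff.2 fun M => ?_
  obtain ⟨m, hm⟩ := exists_nat_gt (max M 0)
  obtain ⟨n, hn⟩ := exists_natCast_add_one_eq_mul_floor
    (monotoneOn_subcubeSide (by linarith : 0 ≤ 1 - ζ / 2) hc)
    (isLittleO_subcubeSide (by linarith : 1 - ζ / 2 < 1))
    (q := 2 * m + 1) (by positivity) (by nlinarith [hb 0 le_rfl])
  have hmn : (m : ℝ) ≤ n / 2 := by
    have : (m : ℤ) * 2 ≤ n := by nlinarith [hb n n.cast_nonneg]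
    rw [le_div_iff₀ two_pos]
    exact_mod_cast this
  refine ⟨n / 2, ⟨by linarith [le_max_right M 0], m, ?_⟩, by linarith [le_max_left M 0]⟩
  rw [show 2 * ((n : ℝ) / 2) + 1 = ((n + 1 : ℕ) : ℝ) by push_cast; ring, Int.floor_natCast]
  push_cast
  exact hn
end

section
/- Let $(a_n)_{n\ge1}$ and $(b_n)_{n\ge1}$ be sequences of positive integers such that $a_n \le a_{n+1} \le a_n + 1$ and $b_n \le b_{n+1} \le b_n + 1$ for all $n$, and $a_n / b_n \to \infty$. Then for every natural number $m$ with $m > a_1 / b_1$, there exists $n$ with $a_n = m\, b_n$. -/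
open Filter

/-! Set `g n = a n - m * b n`: it is negative at `1` by the choice of `m`, eventually nonnegative
because `a n / b n → ∞`, and it grows by at most one per step since `a` grows by at most one and
`b` does not decrease. An integer sequence with such small upward steps cannot jump over `0`. -/

theorem Int.exists_eq_of_succ_le_add_one (g : ℕ → ℤ) {n₀ N : ℕ} {c : ℤ} (hle : n₀ ≤ N)
    (hstart : g n₀ ≤ c) (hend : c ≤ g N) (hstep : ∀ n, n₀ ≤ n → n < N → g (n + 1) ≤ g n + 1) :
    ∃ n, n₀ ≤ n ∧ n ≤ N ∧ g n = c := by
  induction N, hle using Nat.le_induction with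
  | base => exact ⟨n₀, le_rfl, le_rfl, le_antisymm hstart hend⟩
  | succ k hk ih =>
    by_cases hck : c ≤ g k
    · obtain ⟨n, hn₀, hnk, hn⟩ := ih hck fun n h₁ h₂ => hstep n h₁ (by omega)
      exact ⟨n, hn₀, by omega, hn⟩
    · exact ⟨k + 1, by omega, le_rfl, by have := hstep k hk (by omega); omega⟩

theorem sub_mul_succ_le_add_one {a b : ℕ → ℕ} {m n : ℕ} (ha : a (n + 1) ≤ a n + 1)
    (hb : b n ≤ b (n + 1)) :
    (a (n + 1) : ℤ) - m * b (n + 1) ≤ a n - m * b n + 1 := by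
  have : (m : ℤ) * b n ≤ m * b (n + 1) := by gcongr
  omega

theorem ratio_hits_every_integer_general (a b : ℕ → ℕ)
    (hb_pos : ∀ n, 1 ≤ n → 0 < b n)
    (ha_mono : ∀ n, 1 ≤ n → a n ≤ a (n + 1) ∧ a (n + 1) ≤ a n + 1)
    (hb_mono : ∀ n, 1 ≤ n → b n ≤ b (n + 1) ∧ b (n + 1) ≤ b n + 1)
    (hdiv : Tendsto (fun n => (a n : ℝ) / (b n : ℝ)) atTop atTop)
    (m : ℕ) (hm : (a 1 : ℝ) / (b 1 : ℝ) < (m : ℝ)) :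
    ∃ n, 1 ≤ n ∧ a n = m * b n := by
  have hstart : a 1 < m * b 1 := by
    rw [div_lt_iff₀ (by exact_mod_cast hb_pos 1 le_rfl)] at hm
    exact_mod_cast hm
  obtain ⟨N, hN, hN₁⟩ :=
    ((hdiv.eventually_gt_atTop (m : ℝ)).and (eventually_ge_atTop 1)).exists
  have hend : m * b N < a N := by
    rw [lt_div_iff₀ (by exact_mod_cast hb_pos N hN₁)] at hN
    exact_mod_cast hN
  obtain ⟨n, hn₁, -, hn⟩ := Int.exists_eq_of_succ_le_add_one (fun n => (a n : ℤ) - m * b n)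
    (c := 0) hN₁ (by omega) (by omega)
    fun n hn _ => sub_mul_succ_le_add_one (ha_mono n hn).2 (hb_mono n hn).1
  exact ⟨n, hn₁, by omega⟩

/-- Discrete intermediate value theorem for ratios of slowly growing integer
sequences: every natural number larger than `a 1 / b 1` is attained as an
exact quotient. (Sequences are indexed from `1`.) -/
theorem ratio_hits_every_integer (a b : ℕ → ℕ)
    (ha_pos : ∀ n, 1 ≤ n → 0 < a n) (hb_pos : ∀ n, 1 ≤ n → 0 < b n)
    (ha_mono : ∀ n, 1 ≤ n → a n ≤ a (n + 1) ∧ a (n + 1) ≤ a n + 1)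
    (hb_mono : ∀ n, 1 ≤ n → b n ≤ b (n + 1) ∧ b (n + 1) ≤ b n + 1)
    (hdiv : Tendsto (fun n => (a n : ℝ) / (b n : ℝ)) atTop atTop)
    (m : ℕ) (hm : (a 1 : ℝ) / (b 1 : ℝ) < (m : ℝ)) :
    ∃ n, 1 ≤ n ∧ a n = m * b n :=
  ratio_hits_every_integer_general a b hb_pos ha_mono hb_mono hdiv m hm
end
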